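/- arXiv:1007.0227 — 3 statements merged into one kernel-verified Lean document; each statement's English description precedes it below -/
import Mathlib

section
/- Let m = 4t, t ≥ 3, n = 2t, ω a primitive m-th root of unity, and let J = {(i,k) : 1 ≤ i ≤ n−1, 1 ≤ k ≤ m−1, ω^{ik} = −1}. If (i,k), (p,q) ∈ J satisfy ω^{iq + pk} = 1, then ω^{pk} = −1 and ω^{iq} = −1. -/
/-!
Write `d = 2t`, so that `ω ^ d = -1` and `ω ^ a = -1` exactly when `a` is an odd multiple of `d`.
With `u = iq` and `v = pk` we then know `d ∣ u + v` and `u v = (ik)(pq) = d² · odd`. A number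
`d` dividing the sum of `u, v` with `d²` dividing their product divides both (after removing
`g = gcd u v`, the cofactors `u', v'` give coprime `u'v'` and `(u' + v')²`, so `d² ∣ g²`), and
the odd cofactor forces both quotients `u / d`, `v / d` to be odd.
-/

namespace Nat

theorem dvd_of_dvd_add_of_sq_dvd_mul {d u v : ℕ} (hsum : d ∣ u + v) (hprod : d ^ 2 ∣ u * v) :
    d ∣ u := by
  obtain ⟨u', v', hcop, hu, hv⟩ := Nat.exists_coprime u v
  set g := u.gcd v
  have hsq_sum : d ^ 2 ∣ g ^ 2 * (u' + v') ^ 2 := by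
    rw [← mul_pow]
    exact pow_dvd_pow_of_dvd (by rw [hu, hv] at hsum; simpa [mul_comm, add_mul] using hsum) 2
  have hsq_prod : d ^ 2 ∣ g ^ 2 * (u' * v') := by
    rw [hu, hv] at hprod
    exact hprod.trans ⟨1, by ring⟩
  have hcop' : Coprime (u' * v') ((u' + v') ^ 2) :=
    (Coprime.mul_left (coprime_self_add_right.2 hcop)
      (coprime_add_self_right.2 hcop.symm)).pow_right 2
  have hdg : d ^ 2 ∣ g ^ 2 := by
    simpa [Nat.gcd_mul_left, hcop'.gcd_eq_one] using Nat.dvd_gcd hsq_prod hsq_sum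
  exact ((Nat.pow_dvd_pow_iff two_ne_zero).1 hdg).trans (Nat.gcd_dvd_left u v)

theorem exists_odd_of_dvd_add_of_mul_eq_sq_mul_odd {d u v W : ℕ} (hd : 0 < d)
    (hsum : d ∣ u + v) (hprod : u * v = d ^ 2 * W) (hW : Odd W) :
    ∃ a, Odd a ∧ u = d * a := by
  obtain ⟨a, rfl⟩ := dvd_of_dvd_add_of_sq_dvd_mul hsum (hprod ▸ dvd_mul_right _ _)
  obtain ⟨b, rfl⟩ := dvd_of_dvd_add_of_sq_dvd_mul (add_comm (d * a) v ▸ hsum)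
    (by rw [mul_comm]; exact hprod ▸ dvd_mul_right _ _)
  have hab : a * b = W :=
    Nat.eq_of_mul_eq_mul_left (pow_pos hd 2) (by rw [← hprod]; ring)
  exact ⟨a, (Nat.odd_mul.1 (hab ▸ hW)).1, rfl⟩

end Nat

namespace IsPrimitiveRoot

variable {R : Type*} [CommRing R] [NoZeroDivisors R] {ω : R} {d : ℕ}

theorem pow_half_eq_neg_one (hω : IsPrimitiveRoot ω (2 * d)) (hd : 0 < d) : ω ^ d = -1 :=
  eq_neg_one_of_two_right <| by
    simpa [hd.ne'] using hω.pow_of_dvd hd.ne' (dvd_mul_left d 2)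

theorem pow_eq_neg_one_iff (hω : IsPrimitiveRoot ω (2 * d)) (hd : 0 < d) {a : ℕ} :
    ω ^ a = -1 ↔ ∃ w, Odd w ∧ a = d * w := by
  have hhalf := hω.pow_half_eq_neg_one hd
  have hne : (-1 : R) ≠ 1 := hhalf ▸ hω.pow_ne_one_of_pos_of_lt hd.ne' (by omega)
  constructor
  · intro ha
    obtain ⟨w, rfl⟩ : d ∣ a := by
      have : ω ^ (2 * a) = 1 := by rw [mul_comm, pow_mul, ha, neg_one_sq]
      exact Nat.dvd_of_mul_dvd_mul_left two_pos ((hω.pow_eq_one_iff_dvd _).1 this)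
    rw [pow_mul, hhalf, neg_one_pow_eq_neg_one_iff_odd hne] at ha
    exact ⟨w, ha, rfl⟩
  · rintro ⟨w, hw, rfl⟩
    rw [pow_mul, hhalf, hw.neg_one_pow]

end IsPrimitiveRoot

theorem stmt9_general (K : Type*) [Field K] (t m : ℕ) (ht : 3 ≤ t)
    (hm : m = 4 * t) (ω : K) (hω : IsPrimitiveRoot ω m)
    (i k p q : ℕ)
    (hik : ω ^ (i * k) = -1) (hpq : ω ^ (p * q) = -1)
    (h : ω ^ (i * q + p * k) = 1) :
    ω ^ (p * k) = -1 ∧ ω ^ (i * q) = -1 := by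
  have hd : 0 < 2 * t := by omega
  have hω' : IsPrimitiveRoot ω (2 * (2 * t)) := by convert hω using 1; omega
  obtain ⟨w₁, hw₁, hik⟩ := (hω'.pow_eq_neg_one_iff hd).1 hik
  obtain ⟨w₂, hw₂, hpq⟩ := (hω'.pow_eq_neg_one_iff hd).1 hpq
  have hsum : 2 * t ∣ i * q + p * k :=
    (Dvd.intro 2 (by rw [hm]; ring)).trans ((hω.pow_eq_one_iff_dvd _).1 h)
  have hprod : i * q * (p * k) = (2 * t) ^ 2 * (w₁ * w₂) := by
    rw [show i * q * (p * k) = i * k * (p * q) by ring, hik, hpq]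
    ring
  have hW : Odd (w₁ * w₂) := hw₁.mul hw₂
  refine ⟨(hω'.pow_eq_neg_one_iff hd).2 ?_, (hω'.pow_eq_neg_one_iff hd).2 ?_⟩
  · exact Nat.exists_odd_of_dvd_add_of_mul_eq_sq_mul_odd hd (add_comm (i * q) _ ▸ hsum)
      (by rw [mul_comm, hprod]) hW
  · exact Nat.exists_odd_of_dvd_add_of_mul_eq_sq_mul_odd hd hsum hprod hW

/-- For `(i,k), (p,q) ∈ J` with `ω^(iq+pk) = 1`, one has `ω^(pk) = -1` and
`ω^(iq) = -1`. -/
theorem stmt9 (K : Type*) [Field K] [CharZero K] (t m n : ℕ) (ht : 3 ≤ t)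
    (hm : m = 4 * t) (hn : n = 2 * t) (ω : K) (hω : IsPrimitiveRoot ω m)
    (i k p q : ℕ) (hi1 : 1 ≤ i) (hi2 : i ≤ n - 1) (hk1 : 1 ≤ k) (hk2 : k ≤ m - 1)
    (hp1 : 1 ≤ p) (hp2 : p ≤ n - 1) (hq1 : 1 ≤ q) (hq2 : q ≤ m - 1)
    (hik : ω ^ (i * k) = -1) (hpq : ω ^ (p * q) = -1)
    (h : ω ^ (i * q + p * k) = 1) :
    ω ^ (p * k) = -1 ∧ ω ^ (i * q) = -1 :=
  stmt9_general K t m ht hm ω hω i k p q hik hpq h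
end

section
/- For the dihedral rack D_{2m} with m > 2 (i.e. Z/2m with operation i ▷ j = 2i − j), viewing D_{2m} as the conjugacy class of reflections inside a suitable group, there exist r, s in the rack such that (rs)² ≠ (sr)² and r, s are not conjugate in the subgroup generated by r and s; that is, dihedral racks D_{2m}, m > 2, are of type D. -/
open DihedralGroup

/-- The dihedral rack `D_{2m}`, `m > 2`, realized as the set of reflections in
the dihedral group of order `4m`, is of type D: there are reflections `a, b`
with `(ab)² ≠ (ba)²` which are not conjugate in the subgroup generated by
`a` and `b`. -/
theorem stmt15 (m : ℕ) (hm : 2 < m) :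
    ∃ a b : DihedralGroup (2 * m), (∃ j, a = sr j) ∧ (∃ j, b = sr j) ∧
      (a * b) ^ 2 ≠ (b * a) ^ 2 ∧
      ¬ ∃ h ∈ Subgroup.closure {a, b}, h * a * h⁻¹ = b := by
  refine ⟨sr 0, sr 1, ⟨0, rfl⟩, ⟨1, rfl⟩, ?_, ?_⟩
  · have e1 : ((sr 0 * sr 1 : DihedralGroup (2 * m))) ^ 2 = r 2 := by
      rw [sr_mul_sr, pow_two, r_mul_r]; norm_num
    have e2 : ((sr 1 * sr 0 : DihedralGroup (2 * m))) ^ 2 = r (-2) := by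
      rw [sr_mul_sr, pow_two, r_mul_r]; ring_nf
    rw [e1, e2]
    intro h
    have h2 : (2 : ZMod (2 * m)) = -2 := by injection h
    have h4 : ((4 : ℕ) : ZMod (2 * m)) = 0 := by push_cast; linear_combination h2
    rw [ZMod.natCast_eq_zero_iff] at h4
    have := Nat.le_of_dvd (by norm_num) h4
    omega
  · rintro ⟨h, -, hh⟩
    have key : ∀ g : DihedralGroup (2 * m), ∃ k : ZMod (2 * m),
        g * sr 0 * g⁻¹ = sr (2 * k) := by
      intro g
      cases g with
      | r a =>
        refine ⟨-a, ?_⟩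
        have : (r a : DihedralGroup (2 * m))⁻¹ = r (-a) := rfl
        rw [this, r_mul_sr, sr_mul_r]; ring_nf
      | sr a =>
        refine ⟨a, ?_⟩
        have : (sr a : DihedralGroup (2 * m))⁻¹ = sr a := rfl
        rw [this, sr_mul_sr, r_mul_sr]; ring_nf
    obtain ⟨k, hk⟩ := key h
    rw [hk] at hh
    have h1 : (2 * k : ZMod (2 * m)) = 1 := by injection hh
    have h2 := congrArg (ZMod.castHom (⟨m, rfl⟩ : (2:ℕ) ∣ 2 * m) (ZMod 2)) h1
    rw [map_mul, map_ofNat, map_one] at h2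
    rw [show ((2 : ZMod 2)) = 0 from rfl, zero_mul] at h2
    exact absurd h2 (by decide)
end

section
/- Let m = 4t, t ≥ 3, n = 2t. Define an action of the unit group (Z/m)^× on the set J = {(i,k) : 1 ≤ i ≤ n−1, 1 ≤ k ≤ m−1, ω^{ik} = −1} by ℓ·(i,k) = (ℓi mod m, ℓ⁻¹k mod m) if 1 ≤ ℓi mod m < n, and ℓ·(i,k) = (m − (ℓi mod m), ℓ⁻¹k mod m) otherwise. Then this is a well-defined group action of (Z/m)^× on J (in particular ℓ·(i,k) ∈ J for all ℓ coprime to m and (i,k) ∈ J). -/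
/-!
For a primitive `2n`-th root of unity `ω`, `ω ^ x = -1` exactly when `x ≡ n (mod 2n)`, and
`-n ≡ n`, so membership of `(i, k)` in `J` depends on `i` only up to sign modulo `2n`. The
folded first coordinate is the representative in `[0, n]` of `±ℓ i`, so `ℓ` acts as
`(i, k) ↦ (ℓ i, ℓ⁻¹ k)` on `(ZMod 2n / ±1) × ZMod 2n`, which preserves `i k` up to sign.
The new `i` avoids `0` and `n` because `ℓ` is a unit and `0 < 2i < 2n`.
-/

theorem IsPrimitiveRoot.pow_eq_neg_one_iff_s19 {R : Type*} [CommRing R] [NoZeroDivisors R] {ζ : R}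
    {n : ℕ} [NeZero n] (h : IsPrimitiveRoot ζ (2 * n)) (x : ℕ) :
    ζ ^ x = -1 ↔ (x : ZMod (2 * n)) = n := by
  have hsq := h.pow_of_dvd (NeZero.ne n) (dvd_mul_left n 2)
  rw [Nat.mul_div_cancel _ (NeZero.pos n)] at hsq
  rw [← hsq.eq_neg_one_of_two_right, (h.isOfFinOrder (NeZero.ne _)).pow_eq_pow_iff_modEq,
    ← h.eq_orderOf, ZMod.natCast_eq_natCast_iff]

namespace ZMod

variable {n : ℕ}

theorem neg_natCast_eq_self_two_mul (n : ℕ) : -(n : ZMod (2 * n)) = n := by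
  rw [neg_eq_iff_add_eq_zero, ← two_mul]
  exact_mod_cast natCast_self (2 * n)

theorem natAbs_valMinAbs_eq_ite [NeZero n] (a : ZMod (2 * n)) :
    a.valMinAbs.natAbs = if a.val < n then a.val else 2 * n - a.val := by
  have := a.val_lt
  rw [valMinAbs_def_pos, Nat.mul_div_cancel_left _ two_pos]
  split_ifs <;> omega

theorem natAbs_valMinAbs_lt_of_ne [NeZero n] {a : ZMod (2 * n)} (ha : a ≠ n) :
    a.valMinAbs.natAbs < n := by
  have hval : a.val ≠ n := fun h => ha (by rw [← natCast_zmod_val a, h])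
  have := a.val_lt
  rw [natAbs_valMinAbs_eq_ite]
  split_ifs <;> omega

theorem units_mul_natCast_ne_zero {m k : ℕ} (u : (ZMod m)ˣ) (hk : 0 < k) (hkm : k < m) :
    (u : ZMod m) * k ≠ 0 := by
  rw [Ne, Units.mul_right_eq_zero, natCast_eq_zero_iff]
  exact Nat.not_dvd_of_pos_of_lt hk hkm

theorem units_mul_natCast_ne_self {k : ℕ} (u : (ZMod (2 * n))ˣ) (hk : 0 < k) (hkn : k < n) :
    (u : ZMod (2 * n)) * k ≠ n := by
  intro h
  refine units_mul_natCast_ne_zero u (k := 2 * k) (by omega) (by omega) ?_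
  rw [Nat.cast_mul, mul_left_comm, h]
  exact_mod_cast natCast_self (2 * n)

end ZMod

section FoldedAction

open ZMod

variable {n : ℕ}

/-- The folding `a ↦ a mod 2n` or `2n - (a mod 2n)` of the first coordinate is
`a.valMinAbs.natAbs`, see `ZMod.natAbs_valMinAbs_eq_ite`. -/
def foldSMul (ℓ : (ZMod (2 * n))ˣ) (p : ℕ × ℕ) : ℕ × ℕ :=
  (((ℓ : ZMod (2 * n)) * p.1).valMinAbs.natAbs,
    (((ℓ⁻¹ : (ZMod (2 * n))ˣ) : ZMod (2 * n)) * p.2).val)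

def negOnePairs {R : Type*} [Ring R] (ω : R) (n : ℕ) : Set (ℕ × ℕ) :=
  {p | 1 ≤ p.1 ∧ p.1 ≤ n - 1 ∧ 1 ≤ p.2 ∧ p.2 ≤ 2 * n - 1 ∧ ω ^ (p.1 * p.2) = -1}

theorem foldSMul_mem_negOnePairs [NeZero n] {R : Type*} [CommRing R] [NoZeroDivisors R] {ω : R}
    (hω : IsPrimitiveRoot ω (2 * n)) (ℓ : (ZMod (2 * n))ˣ) {p : ℕ × ℕ}
    (hp : p ∈ negOnePairs ω n) : foldSMul ℓ p ∈ negOnePairs ω n := by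
  obtain ⟨i, k⟩ := p
  obtain ⟨hi1, hi2, hk1, hk2, hik⟩ := hp
  have hℓi : (ℓ : ZMod (2 * n)) * i ≠ 0 := units_mul_natCast_ne_zero ℓ hi1 (by omega)
  have hℓk : ((ℓ⁻¹ : (ZMod (2 * n))ˣ) : ZMod (2 * n)) * k ≠ 0 :=
    units_mul_natCast_ne_zero ℓ⁻¹ hk1 (by omega)
  have hfst_lt : ((ℓ : ZMod (2 * n)) * i).valMinAbs.natAbs < n :=
    natAbs_valMinAbs_lt_of_ne (units_mul_natCast_ne_self ℓ hi1 (by omega))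
  have hfst_pos : ((ℓ : ZMod (2 * n)) * i).valMinAbs.natAbs ≠ 0 := by
    rwa [Int.natAbs_ne_zero, Ne, valMinAbs_eq_zero]
  have hsnd_pos : (((ℓ⁻¹ : (ZMod (2 * n))ˣ) : ZMod (2 * n)) * k).val ≠ 0 := by
    rwa [val_ne_zero]
  have hsnd_lt := (((ℓ⁻¹ : (ZMod (2 * n))ˣ) : ZMod (2 * n)) * k).val_lt
  rw [hω.pow_eq_neg_one_iff_s19] at hik
  simp only [negOnePairs, foldSMul, Set.mem_ofPred_eq]
  refine ⟨by omega, by omega, by omega, by omega, ?_⟩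
  rw [hω.pow_eq_neg_one_iff_s19, Nat.cast_mul, natCast_natAbs_valMinAbs, natCast_zmod_val]
  have hprod :
      (ℓ : ZMod (2 * n)) * i * (((ℓ⁻¹ : (ZMod (2 * n))ˣ) : ZMod (2 * n)) * k) = i * k := by
    rw [mul_mul_mul_comm, Units.mul_inv, one_mul]
  split_ifs
  · rw [hprod, ← Nat.cast_mul, hik]
  · rw [neg_mul, hprod, ← Nat.cast_mul, hik, neg_natCast_eq_self_two_mul]

theorem foldSMul_one [NeZero n] {p : ℕ × ℕ} (h1 : p.1 ≤ n) (h2 : p.2 < 2 * n) :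
    foldSMul (n := n) 1 p = p := by
  have h1' : p.1 ≤ 2 * n / 2 := by omega
  simp only [foldSMul, Units.val_one, inv_one, one_mul, valMinAbs_natCast_of_le_half h1',
    Int.natAbs_natCast, val_natCast_of_lt h2]

theorem foldSMul_mul [NeZero n] (ℓ₁ ℓ₂ : (ZMod (2 * n))ˣ) (p : ℕ × ℕ) :
    foldSMul (ℓ₁ * ℓ₂) p = foldSMul ℓ₁ (foldSMul ℓ₂ p) := by
  simp only [foldSMul, natCast_zmod_val, natCast_natAbs_valMinAbs, mul_inv, Units.val_mul,
    mul_assoc]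
  split_ifs
  · rfl
  · rw [mul_neg, natAbs_valMinAbs_neg]

end FoldedAction

theorem stmt19_general (K : Type*) [Field K] (t m n : ℕ) (ht : 3 ≤ t)
    (hm : m = 4 * t) (hn : n = 2 * t) (ω : K) (hω : IsPrimitiveRoot ω m)
    (J : Set (ℕ × ℕ))
    (hJ : J = {p : ℕ × ℕ | 1 ≤ p.1 ∧ p.1 ≤ n - 1 ∧ 1 ≤ p.2 ∧ p.2 ≤ m - 1 ∧
      ω ^ (p.1 * p.2) = -1})
    (act : (ZMod m)ˣ → ℕ × ℕ → ℕ × ℕ)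
    (hact : ∀ (ℓ : (ZMod m)ˣ) (p : ℕ × ℕ),
      act ℓ p =
        if ((ℓ : ZMod m) * (p.1 : ZMod m)).val < n then
          (((ℓ : ZMod m) * (p.1 : ZMod m)).val,
            (((ℓ⁻¹ : (ZMod m)ˣ) : ZMod m) * (p.2 : ZMod m)).val)
        else
          (m - ((ℓ : ZMod m) * (p.1 : ZMod m)).val,
            (((ℓ⁻¹ : (ZMod m)ˣ) : ZMod m) * (p.2 : ZMod m)).val)) :
    (∀ (ℓ : (ZMod m)ˣ) (p : ℕ × ℕ), p ∈ J → act ℓ p ∈ J) ∧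
    (∀ p ∈ J, act 1 p = p) ∧
    (∀ (ℓ₁ ℓ₂ : (ZMod m)ˣ) (p : ℕ × ℕ), p ∈ J →
      act (ℓ₁ * ℓ₂) p = act ℓ₁ (act ℓ₂ p)) := by
  obtain rfl : m = 2 * n := by omega
  have : NeZero n := ⟨by omega⟩
  obtain rfl : J = negOnePairs ω n := hJ
  obtain rfl : act = foldSMul := by
    ext1 ℓ; ext1 p
    rw [hact, foldSMul, ZMod.natAbs_valMinAbs_eq_ite]
    split_ifs <;> rfl
  refine ⟨fun ℓ p hp => foldSMul_mem_negOnePairs hω ℓ hp, ?_,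
    fun ℓ₁ ℓ₂ p _ => foldSMul_mul ℓ₁ ℓ₂ p⟩
  rintro p ⟨-, hp1, -, hp2, -⟩
  exact foldSMul_one (by omega) (by omega)

/-- The folding operation `ℓ·(i,k)` defines a well-defined action of the unit
group `(ℤ/m)ˣ` on `J = {(i,k) : 1 ≤ i ≤ n-1, 1 ≤ k ≤ m-1, ω^(ik) = -1}`. -/
theorem stmt19 (K : Type*) [Field K] [CharZero K] (t m n : ℕ) (ht : 3 ≤ t)
    (hm : m = 4 * t) (hn : n = 2 * t) (ω : K) (hω : IsPrimitiveRoot ω m)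
    (J : Set (ℕ × ℕ))
    (hJ : J = {p : ℕ × ℕ | 1 ≤ p.1 ∧ p.1 ≤ n - 1 ∧ 1 ≤ p.2 ∧ p.2 ≤ m - 1 ∧
      ω ^ (p.1 * p.2) = -1})
    (act : (ZMod m)ˣ → ℕ × ℕ → ℕ × ℕ)
    (hact : ∀ (ℓ : (ZMod m)ˣ) (p : ℕ × ℕ),
      act ℓ p =
        if ((ℓ : ZMod m) * (p.1 : ZMod m)).val < n then
          (((ℓ : ZMod m) * (p.1 : ZMod m)).val,
            (((ℓ⁻¹ : (ZMod m)ˣ) : ZMod m) * (p.2 : ZMod m)).val)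
        else
          (m - ((ℓ : ZMod m) * (p.1 : ZMod m)).val,
            (((ℓ⁻¹ : (ZMod m)ˣ) : ZMod m) * (p.2 : ZMod m)).val)) :
    (∀ (ℓ : (ZMod m)ˣ) (p : ℕ × ℕ), p ∈ J → act ℓ p ∈ J) ∧
    (∀ p ∈ J, act 1 p = p) ∧
    (∀ (ℓ₁ ℓ₂ : (ZMod m)ˣ) (p : ℕ × ℕ), p ∈ J →
      act (ℓ₁ * ℓ₂) p = act ℓ₁ (act ℓ₂ p)) :=
  stmt19_general K t m n ht hm hn ω hω J hJ act hact
end
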